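/- arXiv:2004.04358 — 2 statements merged into one kernel-verified Lean document; each statement's English description precedes it below -/
import Mathlib

section
/- For all natural numbers n and j with j ≤ 2n+2, there exists a constant C_{j,n} > 0 such that for all τ > 0 and all ζ ∈ ℝ, |(d/dζ)^j ( e^{τζ²} − s_n(τζ²) )| ≤ C_{j,n} τ^{n+1} |ζ|^{2n+2−j} e^{(2 − 1/(j+1)) τ ζ²}. -/
open Real

/-- `sExp n x` is the `n`-th partial sum `s_n(x) = ∑_{k=0}^n x^k / k!` of the exponential
series. -/
noncomputable def sExp (n : ℕ) (x : ℝ) : ℝ :=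
  ∑ k ∈ Finset.range (n + 1), x ^ k / (Nat.factorial k : ℝ)

lemma summable_aux (x : ℝ) : Summable (fun k : ℕ => x ^ k / (Nat.factorial k : ℝ)) := by
  simpa [div_eq_mul_inv, mul_comm] using Real.summable_pow_div_factorial x

lemma exp_sub_sExp_eq (m : ℕ) (x : ℝ) :
    Real.exp x - sExp m x = ∑' k : ℕ, x ^ (k + (m + 1)) / (Nat.factorial (k + (m + 1)) : ℝ) := by
  have h := Summable.sum_add_tsum_nat_add (f := fun k : ℕ => x ^ k / (Nat.factorial k : ℝ))
    (m + 1) (summable_aux x)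
  have hexp : Real.exp x = ∑' k : ℕ, x ^ k / (Nat.factorial k : ℝ) := by
    rw [Real.exp_eq_exp_ℝ, NormedSpace.exp_eq_tsum_div]
  rw [hexp, sExp, ← h]
  ring

lemma sExp_le_exp (m : ℕ) {x : ℝ} (hx : 0 ≤ x) : sExp m x ≤ Real.exp x := by
  have h := exp_sub_sExp_eq m x
  have : 0 ≤ ∑' k : ℕ, x ^ (k + (m + 1)) / (Nat.factorial (k + (m + 1)) : ℝ) :=
    tsum_nonneg fun k => by positivity
  linarith

lemma pow_div_factorial_le_exp (p : ℕ) {x : ℝ} (hx : 0 ≤ x) :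
    x ^ p / (Nat.factorial p : ℝ) ≤ Real.exp x := by
  refine le_trans ?_ (sExp_le_exp p hx)
  exact Finset.single_le_sum (f := fun k => x ^ k / (Nat.factorial k : ℝ))
    (fun k _ => by positivity) (Finset.self_mem_range_succ p)

lemma exp_sub_sExp_le (m : ℕ) {x : ℝ} (hx : 0 ≤ x) :
    Real.exp x - sExp m x ≤ x ^ (m + 1) / (Nat.factorial (m + 1) : ℝ) * Real.exp x := by
  rw [exp_sub_sExp_eq m x]
  have hexp : Real.exp x = ∑' k : ℕ, x ^ k / (Nat.factorial k : ℝ) := by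
    rw [Real.exp_eq_exp_ℝ, NormedSpace.exp_eq_tsum_div]
  rw [hexp, ← tsum_mul_left]
  have hterm : ∀ k : ℕ, x ^ (k + (m + 1)) / (Nat.factorial (k + (m + 1)) : ℝ)
      ≤ x ^ (m + 1) / (Nat.factorial (m + 1) : ℝ) * (x ^ k / (Nat.factorial k : ℝ)) := by
    intro k
    have hfac : ((Nat.factorial (m + 1) : ℝ)) * (Nat.factorial k : ℝ)
        ≤ (Nat.factorial (k + (m + 1)) : ℝ) := by
      exact_mod_cast Nat.le_of_dvd (Nat.factorial_pos _)
        (by simpa [Nat.add_comm] using Nat.factorial_mul_factorial_dvd_factorial_add (m+1) k)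
    have h1 : x ^ (k + (m + 1)) / (Nat.factorial (k + (m + 1)) : ℝ)
        ≤ x ^ (k + (m + 1)) / ((Nat.factorial (m + 1) : ℝ) * (Nat.factorial k : ℝ)) :=
      div_le_div_of_nonneg_left (by positivity) (by positivity) hfac
    refine h1.trans (le_of_eq ?_)
    rw [pow_add]
    field_simp
  have hs2 : Summable (fun k : ℕ =>
      x ^ (m + 1) / (Nat.factorial (m + 1) : ℝ) * (x ^ k / (Nat.factorial k : ℝ))) :=
    (summable_aux x).mul_left _
  have hs1 : Summable (fun k : ℕ => x ^ (k + (m + 1)) / (Nat.factorial (k + (m + 1)) : ℝ)) :=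
    Summable.of_nonneg_of_le (fun k => by positivity) hterm hs2
  exact Summable.tsum_le_tsum hterm hs1 hs2

/-- Coefficients in the formula for the `j`-th derivative of `ζ ↦ g (τ ζ²)`. -/
def cc : ℕ → ℕ → ℕ
  | 0, 0 => 1
  | 0, _+1 => 0
  | _+1, 0 => 0
  | j+1, i+1 => (2*(i+1) - j) * cc j (i+1) + 2 * cc j i

lemma cc_eq_zero_of_lt : ∀ j i, 2 * i < j → cc j i = 0 := by
  intro j
  induction j with
  | zero => intro i h; omega
  | succ j ih =>
    intro i h
    match i with
    | 0 => rfl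
    | i+1 =>
      have h1 : 2*(i+1) - j = 0 := by omega
      have h2 : cc j i = 0 := ih i (by omega)
      simp [cc, h1, h2]

lemma cc_eq_zero_of_gt : ∀ j i, j < i → cc j i = 0 := by
  intro j
  induction j with
  | zero => intro i h; match i, h with | i+1, _ => rfl
  | succ j ih =>
    intro i h
    match i, h with
    | i+1, h =>
      have h1 : cc j (i+1) = 0 := ih (i+1) (by omega)
      have h2 : cc j i = 0 := ih i (by omega)
      simp [cc, h1, h2]

/-- `gg n i` is the `i`-th derivative of `x ↦ exp x - sExp n x`. -/
noncomputable def gg (n i : ℕ) (x : ℝ) : ℝ :=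
  if i ≤ n then Real.exp x - sExp (n - i) x else Real.exp x

lemma hasDerivAt_sExp_succ (m : ℕ) (x : ℝ) : HasDerivAt (sExp (m+1)) (sExp m x) x := by
  have h : HasDerivAt (fun y : ℝ => ∑ k ∈ Finset.range (m+2), y ^ k / (Nat.factorial k : ℝ))
      (∑ k ∈ Finset.range (m+2), (k : ℝ) * x ^ (k-1) / (Nat.factorial k : ℝ)) x := by
    refine HasDerivAt.fun_sum (fun k _ => ?_)
    simpa [div_eq_mul_inv] using (hasDerivAt_pow k x).mul_const ((Nat.factorial k : ℝ)⁻¹)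
  have heq : (∑ k ∈ Finset.range (m+2), (k : ℝ) * x ^ (k-1) / (Nat.factorial k : ℝ))
      = sExp m x := by
    rw [Finset.sum_range_succ' (fun k => (k : ℝ) * x ^ (k-1) / (Nat.factorial k : ℝ)) (m+1)]
    simp only [Nat.cast_zero, zero_mul, zero_div, add_zero, sExp]
    refine Finset.sum_congr rfl (fun k _ => ?_)
    rw [Nat.factorial_succ, Nat.cast_mul, Nat.add_sub_cancel]
    have : ((k:ℝ)+1) ≠ 0 := by positivity
    field_simp
  rw [← heq]
  exact h

lemma gg_eq_of_le {n i : ℕ} (h : i ≤ n) : gg n i = fun x => Real.exp x - sExp (n - i) x := by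
  funext y; simp [gg, h]

lemma gg_eq_of_gt {n i : ℕ} (h : n < i) : gg n i = Real.exp := by
  funext y; simp [gg, Nat.not_le.2 h]

lemma hasDerivAt_gg (n i : ℕ) (x : ℝ) : HasDerivAt (gg n i) (gg n (i+1) x) x := by
  rcases lt_trichotomy i n with h | h | h
  · have h3 : n - i = (n - (i+1)) + 1 := by omega
    rw [gg_eq_of_le h.le, gg_eq_of_le (show i+1 ≤ n from h)]
    simp only [h3]
    exact (Real.hasDerivAt_exp x).sub (hasDerivAt_sExp_succ _ x)
  · subst h
    rw [gg_eq_of_le (le_refl i), gg_eq_of_gt (by omega : i < i+1), Nat.sub_self]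
    have h0 : HasDerivAt (sExp 0) 0 x := by
      have he : (sExp 0 : ℝ → ℝ) = fun _ => 1 := by
        funext y; simp [sExp]
      rw [he]; exact hasDerivAt_const x 1
    exact ((Real.hasDerivAt_exp x).sub h0).congr_deriv (sub_zero _)
  · rw [gg_eq_of_gt h, gg_eq_of_gt (by omega : n < i+1)]
    exact Real.hasDerivAt_exp x

lemma hasDerivAt_gg_comp (n i : ℕ) (τ ζ : ℝ) :
    HasDerivAt (fun z : ℝ => gg n i (τ * z^2)) (gg n (i+1) (τ * ζ^2) * (τ * (2 * ζ))) ζ := by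
  have hinner : HasDerivAt (fun z : ℝ => τ * z^2) (τ * (2 * ζ)) ζ := by
    simpa using ((hasDerivAt_pow 2 ζ).const_mul τ)
  exact (hasDerivAt_gg n i (τ * ζ^2)).comp ζ hinner

lemma iteratedDeriv_formula (n : ℕ) (τ : ℝ) : ∀ (j : ℕ) (ζ : ℝ),
    iteratedDeriv j (fun z : ℝ => gg n 0 (τ * z^2)) ζ
      = ∑ i ∈ Finset.range (j+1),
          (cc j i : ℝ) * τ^i * ζ^(2*i - j) * gg n i (τ * ζ^2) := by
  intro j
  induction j with
  | zero =>
    intro ζ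
    simp [cc, iteratedDeriv_zero]
  | succ j ih =>
    intro ζ
    rw [iteratedDeriv_succ]
    have hfe : iteratedDeriv j (fun z : ℝ => gg n 0 (τ * z^2))
        = fun ζ => ∑ i ∈ Finset.range (j+1),
            (cc j i : ℝ) * τ^i * ζ^(2*i - j) * gg n i (τ * ζ^2) := funext ih
    rw [hfe]
    -- derivative of each summand
    have hterm : ∀ i ∈ Finset.range (j+1), HasDerivAt
        (fun ζ : ℝ => (cc j i : ℝ) * τ^i * ζ^(2*i - j) * gg n i (τ * ζ^2))
        ((cc j i : ℝ) * τ^i *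
          (((2*i - j : ℕ) : ℝ) * ζ^(2*i - j - 1) * gg n i (τ * ζ^2)
            + ζ^(2*i - j) * (gg n (i+1) (τ * ζ^2) * (τ * (2 * ζ))))) ζ := by
      intro i _
      have h1 := (hasDerivAt_pow (2*i - j) ζ).mul (hasDerivAt_gg_comp n i τ ζ)
      have h2 := h1.const_mul ((cc j i : ℝ) * τ^i)
      have hfun : (fun ζ : ℝ => (cc j i : ℝ) * τ^i * ζ^(2*i - j) * gg n i (τ * ζ^2))
          = fun ζ : ℝ => (cc j i : ℝ) * τ^i * (ζ^(2*i - j) * gg n i (τ * ζ^2)) := by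
        funext z; ring
      have hval : (cc j i : ℝ) * τ^i *
            (((2*i - j : ℕ) : ℝ) * ζ^(2*i - j - 1) * gg n i (τ * ζ^2)
              + ζ^(2*i - j) * (gg n (i+1) (τ * ζ^2) * (τ * (2 * ζ))))
          = (cc j i : ℝ) * τ^i *
            (((2*i - j : ℕ) : ℝ) * ζ^(2*i - j - 1) * gg n i (τ * ζ^2)
              + ζ^(2*i - j) * (gg n (i+1) (τ * ζ^2) * (τ * (2 * ζ)))) := rfl
      rw [hfun]
      convert h2 using 2 <;> rfl
    have hderiv : deriv (fun ζ : ℝ => ∑ i ∈ Finset.range (j+1),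
          (cc j i : ℝ) * τ^i * ζ^(2*i - j) * gg n i (τ * ζ^2)) ζ
        = ∑ i ∈ Finset.range (j+1),
          ((cc j i : ℝ) * τ^i *
            (((2*i - j : ℕ) : ℝ) * ζ^(2*i - j - 1) * gg n i (τ * ζ^2)
              + ζ^(2*i - j) * (gg n (i+1) (τ * ζ^2) * (τ * (2 * ζ))))) :=
      (HasDerivAt.fun_sum hterm).deriv
    rw [hderiv]
    -- now pure algebra of finite sums
    have expand : ∀ i, (cc j i : ℝ) * τ^i *
          (((2*i - j : ℕ) : ℝ) * ζ^(2*i - j - 1) * gg n i (τ * ζ^2)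
            + ζ^(2*i - j) * (gg n (i+1) (τ * ζ^2) * (τ * (2 * ζ))))
        = ((2*i - j : ℕ) : ℝ) * (cc j i : ℝ) * τ^i * ζ^(2*i - (j+1)) * gg n i (τ * ζ^2)
          + 2 * (cc j i : ℝ) * τ^(i+1) * ζ^(2*(i+1) - (j+1)) * gg n (i+1) (τ * ζ^2) := by
      intro i
      rcases Nat.lt_or_ge (2*i) j with h | h
      · have hc : cc j i = 0 := cc_eq_zero_of_lt j i h
        simp [hc]
      · have e1 : 2*i - j - 1 = 2*i - (j+1) := by omega
        have e2 : 2*(i+1) - (j+1) = (2*i - j) + 1 := by omega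
        rw [e1, e2, pow_succ]
        ring
    rw [Finset.sum_congr rfl (fun i _ => expand i), Finset.sum_add_distrib]
    -- RHS: peel off the i = 0 term (which is 0) and use the recurrence
    rw [Finset.sum_range_succ' (fun i => (cc (j+1) i : ℝ) * τ^i * ζ^(2*i - (j+1)) * gg n i (τ * ζ^2)) (j+1)]
    have hcc0 : cc (j+1) 0 = 0 := rfl
    rw [hcc0]
    simp only [Nat.cast_zero, zero_mul]
    rw [add_zero]
    have hccrec : ∀ i, (cc (j+1) (i+1) : ℝ)
        = ((2*(i+1) - j : ℕ) : ℝ) * (cc j (i+1) : ℝ) + 2 * (cc j i : ℝ) := by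
      intro i
      show ((((2*(i+1) - j) * cc j (i+1) + 2 * cc j i : ℕ)) : ℝ) = _
      push_cast
      ring
    -- split target sum accordingly
    have : ∑ i ∈ Finset.range (j+1),
          (cc (j+1) (i+1) : ℝ) * τ^(i+1) * ζ^(2*(i+1) - (j+1)) * gg n (i+1) (τ * ζ^2)
        = (∑ i ∈ Finset.range (j+1),
            ((2*(i+1) - j : ℕ) : ℝ) * (cc j (i+1) : ℝ) * τ^(i+1) * ζ^(2*(i+1) - (j+1)) * gg n (i+1) (τ * ζ^2))
          + ∑ i ∈ Finset.range (j+1),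
            2 * (cc j i : ℝ) * τ^(i+1) * ζ^(2*(i+1) - (j+1)) * gg n (i+1) (τ * ζ^2) := by
      rw [← Finset.sum_add_distrib]
      refine Finset.sum_congr rfl (fun i _ => ?_)
      rw [hccrec i]; ring
    rw [this]

    congr 1
    set A : ℕ → ℝ := fun i =>
      ((2*i - j : ℕ) : ℝ) * (cc j i : ℝ) * τ^i * ζ^(2*i - (j+1)) * gg n i (τ * ζ^2) with hA
    have hA0 : A 0 = 0 := by
      have h0 : (2*0 - j : ℕ) = 0 := by omega
      simp [hA, h0]
    have hAtop : A (j+1) = 0 := by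
      simp [hA, cc_eq_zero_of_gt j (j+1) (by omega)]
    calc ∑ i ∈ Finset.range (j+1), A i
        = ∑ i ∈ Finset.range (j+2), A i := by
          rw [Finset.sum_range_succ A (j+1), hAtop, add_zero]
      _ = (∑ i ∈ Finset.range (j+1), A (i+1)) + A 0 := Finset.sum_range_succ' A (j+1)
      _ = ∑ i ∈ Finset.range (j+1), A (i+1) := by rw [hA0, add_zero]

lemma one_le_aexp (j : ℕ) : (1:ℝ) ≤ 2 - 1/((j:ℝ)+1) := by
  have h1 : (0:ℝ) < (j:ℝ)+1 := by positivity
  have : 1/((j:ℝ)+1) ≤ 1 := by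
    rw [div_le_one h1]; linarith [Nat.cast_nonneg (α := ℝ) j]
  linarith

lemma three_half_le_aexp {j : ℕ} (hj : 1 ≤ j) : (3/2:ℝ) ≤ 2 - 1/((j:ℝ)+1) := by
  have h1 : (2:ℝ) ≤ (j:ℝ)+1 := by
    have : (1:ℝ) ≤ (j:ℝ) := by exact_mod_cast hj
    linarith
  have : 1/((j:ℝ)+1) ≤ 1/2 := by
    apply div_le_div_of_nonneg_left (by norm_num) (by norm_num) h1
  linarith

lemma term_bound (n j i : ℕ) (hj : j ≤ 2*n+2) (hij : i ≤ j) (hji : j ≤ 2*i)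
    {τ : ℝ} (hτ : 0 < τ) (ζ : ℝ) :
    τ^i * |ζ|^(2*i - j) * |gg n i (τ * ζ^2)|
      ≤ (if i ≤ n then ((Nat.factorial (n+1-i) : ℝ))⁻¹
          else 2^(i-(n+1)) * (Nat.factorial (i-(n+1)) : ℝ))
        * (τ^(n+1) * |ζ|^(2*n+2 - j) * Real.exp ((2 - 1/((j:ℝ)+1)) * (τ * ζ^2))) := by
  set x := τ * ζ^2 with hxdef
  have hx : 0 ≤ x := by positivity
  set a := 2 - 1/((j:ℝ)+1) with hadef
  have ha1 : (1:ℝ) ≤ a := one_le_aexp j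
  by_cases hin : i ≤ n
  · rw [if_pos hin]
    -- |gg| ≤ x^(n+1-i)/(n+1-i)! * exp x
    have hm : n - i + 1 = n + 1 - i := by omega
    have hggnn : 0 ≤ gg n i x := by
      rw [gg, if_pos hin]
      linarith [sExp_le_exp (n - i) hx]
    have hgg : |gg n i x| ≤ x^(n+1-i) / (Nat.factorial (n+1-i) : ℝ) * Real.exp x := by
      rw [abs_of_nonneg hggnn, gg, if_pos hin, ← hm]
      exact exp_sub_sExp_le (n - i) hx
    have hxpow : x^(n+1-i) = τ^(n+1-i) * |ζ|^(2*(n+1-i)) := by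
      rw [hxdef, mul_pow, ← sq_abs, ← pow_mul]
    have hrw : τ^i * |ζ|^(2*i - j) * (x^(n+1-i) / (Nat.factorial (n+1-i) : ℝ) * Real.exp x)
        = (Nat.factorial (n+1-i) : ℝ)⁻¹ * (τ^(n+1) * |ζ|^(2*n+2 - j) * Real.exp x) := by
      rw [hxpow]
      have hτp : τ^i * τ^(n+1-i) = τ^(n+1) := by
        rw [← pow_add]; congr 1; omega
      have hζp : |ζ|^(2*i - j) * |ζ|^(2*(n+1-i)) = |ζ|^(2*n+2 - j) := by
        rw [← pow_add]; congr 1; omega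
      calc τ^i * |ζ|^(2*i - j) * (τ^(n+1-i) * |ζ|^(2*(n+1-i)) / (Nat.factorial (n+1-i) : ℝ) * Real.exp x)
          = (Nat.factorial (n+1-i) : ℝ)⁻¹ * ((τ^i * τ^(n+1-i)) * (|ζ|^(2*i - j) * |ζ|^(2*(n+1-i))) * Real.exp x) := by
            ring
        _ = _ := by rw [hτp, hζp]
    have hexpa : Real.exp x ≤ Real.exp (a * x) := by
      apply Real.exp_le_exp.2
      nlinarith
    calc τ^i * |ζ|^(2*i - j) * |gg n i x|
        ≤ τ^i * |ζ|^(2*i - j) * (x^(n+1-i) / (Nat.factorial (n+1-i) : ℝ) * Real.exp x) := by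
          apply mul_le_mul_of_nonneg_left hgg (by positivity)
      _ = (Nat.factorial (n+1-i) : ℝ)⁻¹ * (τ^(n+1) * |ζ|^(2*n+2 - j) * Real.exp x) := hrw
      _ ≤ (Nat.factorial (n+1-i) : ℝ)⁻¹ * (τ^(n+1) * |ζ|^(2*n+2 - j) * Real.exp (a * x)) := by
          apply mul_le_mul_of_nonneg_left _ (by positivity)
          apply mul_le_mul_of_nonneg_left hexpa (by positivity)
  · rw [if_neg hin]
    push_neg at hin
    have hj1 : 1 ≤ j := by omega
    set p := i - (n+1) with hpdef
    have hip : i = (n+1) + p := by omega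
    have hgg : |gg n i x| = Real.exp x := by
      rw [gg_eq_of_gt hin, abs_of_pos (Real.exp_pos x)]
    have hτp : τ^i = τ^(n+1) * τ^p := by rw [hip, pow_add]
    have hζp : |ζ|^(2*i - j) = |ζ|^(2*n+2 - j) * |ζ|^(2*p) := by
      rw [← pow_add]; congr 1; omega
    have hxp : τ^p * |ζ|^(2*p) = x^p := by
      rw [hxdef, mul_pow, ← sq_abs ζ, ← pow_mul]
    have hxpb : x^p ≤ 2^p * (Nat.factorial p : ℝ) * Real.exp (x/2) := by
      have h := pow_div_factorial_le_exp p (x := x/2) (by positivity)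
      have h2 : (x/2)^p = x^p / 2^p := div_pow x 2 p
      rw [h2] at h
      have hfp : (0:ℝ) < (Nat.factorial p : ℝ) := by exact_mod_cast Nat.factorial_pos p
      have h2p : (0:ℝ) < (2:ℝ)^p := by positivity
      rw [div_div, div_le_iff₀ (by positivity)] at h
      calc x^p ≤ Real.exp (x/2) * (2^p * (Nat.factorial p : ℝ)) := h
        _ = 2^p * (Nat.factorial p : ℝ) * Real.exp (x/2) := by ring
    have hexpa : Real.exp x * Real.exp (x/2) ≤ Real.exp (a * x) := by
      rw [← Real.exp_add]
      apply Real.exp_le_exp.2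
      have h32 := three_half_le_aexp hj1
      nlinarith
    calc τ^i * |ζ|^(2*i - j) * |gg n i x|
        = (τ^(n+1) * |ζ|^(2*n+2 - j)) * (x^p * Real.exp x) := by
          rw [hgg, hτp, hζp, ← hxp]; ring
      _ ≤ (τ^(n+1) * |ζ|^(2*n+2 - j)) * ((2^p * (Nat.factorial p : ℝ) * Real.exp (x/2)) * Real.exp x) := by
          apply mul_le_mul_of_nonneg_left _ (by positivity)
          apply mul_le_mul_of_nonneg_right hxpb (le_of_lt (Real.exp_pos x))
      _ = (2^p * (Nat.factorial p : ℝ)) * (τ^(n+1) * |ζ|^(2*n+2 - j) * (Real.exp x * Real.exp (x/2))) := by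
          ring
      _ ≤ (2^p * (Nat.factorial p : ℝ)) * (τ^(n+1) * |ζ|^(2*n+2 - j) * Real.exp (a * x)) := by
          apply mul_le_mul_of_nonneg_left _ (by positivity)
          apply mul_le_mul_of_nonneg_left hexpa (by positivity)

/-- For all natural numbers `n` and `j` with `j ≤ 2n+2`, there exists a constant
`C_{j,n} > 0` such that for all `τ > 0` and all `ζ ∈ ℝ`,
`|(d/dζ)^j ( e^{τζ²} − s_n(τζ²) )| ≤ C_{j,n} τ^{n+1} |ζ|^{2n+2−j} e^{(2 − 1/(j+1)) τ ζ²}`. -/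
theorem iteratedDeriv_exp_sub_sExp_bound (n j : ℕ) (hj : j ≤ 2 * n + 2) :
    ∃ C : ℝ, 0 < C ∧ ∀ τ : ℝ, 0 < τ → ∀ ζ : ℝ,
      |iteratedDeriv j (fun z : ℝ => Real.exp (τ * z ^ 2) - sExp n (τ * z ^ 2)) ζ| ≤
        C * τ ^ (n + 1) * |ζ| ^ (2 * n + 2 - j) *
          Real.exp ((2 - 1 / ((j : ℝ) + 1)) * τ * ζ ^ 2) := by
  set B : ℕ → ℝ := fun i => if i ≤ n then ((Nat.factorial (n+1-i) : ℝ))⁻¹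
      else 2^(i-(n+1)) * (Nat.factorial (i-(n+1)) : ℝ) with hB
  have hBnn : ∀ i, 0 ≤ B i := by
    intro i
    rw [hB]
    dsimp only
    split <;> positivity
  set S : ℝ := ∑ i ∈ Finset.range (j+1), (cc j i : ℝ) * B i with hS
  have hSnn : 0 ≤ S :=
    Finset.sum_nonneg fun i _ => mul_nonneg (Nat.cast_nonneg _) (hBnn i)
  refine ⟨S + 1, by linarith, ?_⟩
  intro τ hτ ζ
  have hfun : (fun z : ℝ => Real.exp (τ * z ^ 2) - sExp n (τ * z ^ 2))
      = fun z : ℝ => gg n 0 (τ * z^2) := by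
    funext z
    rw [gg, if_pos (Nat.zero_le n), Nat.sub_zero]
  rw [hfun, iteratedDeriv_formula]
  set R : ℝ := τ^(n+1) * |ζ|^(2*n+2 - j) * Real.exp ((2 - 1/((j:ℝ)+1)) * (τ * ζ^2)) with hR
  have hRnn : 0 ≤ R := by positivity
  have hterm : ∀ i ∈ Finset.range (j+1),
      |(cc j i : ℝ) * τ^i * ζ^(2*i - j) * gg n i (τ * ζ^2)| ≤ (cc j i : ℝ) * B i * R := by
    intro i hi
    rcases Nat.eq_zero_or_pos (cc j i) with hc | hc
    · simp [hc]
    · have hij : i ≤ j := by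
        by_contra h
        rw [cc_eq_zero_of_gt j i (by omega)] at hc; omega
      have hji : j ≤ 2*i := by
        by_contra h
        rw [cc_eq_zero_of_lt j i (by omega)] at hc; omega
      have habs : |(cc j i : ℝ) * τ^i * ζ^(2*i - j) * gg n i (τ * ζ^2)|
          = (cc j i : ℝ) * (τ^i * |ζ|^(2*i - j) * |gg n i (τ * ζ^2)|) := by
        rw [abs_mul, abs_mul, abs_mul, abs_pow, abs_pow,
          abs_of_nonneg (Nat.cast_nonneg (cc j i) : (0:ℝ) ≤ _), abs_of_pos hτ]
        ring
      rw [habs]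
      have := term_bound n j i hj hij hji hτ ζ
      calc (cc j i : ℝ) * (τ^i * |ζ|^(2*i - j) * |gg n i (τ * ζ^2)|)
          ≤ (cc j i : ℝ) * (B i * R) := by
            apply mul_le_mul_of_nonneg_left _ (Nat.cast_nonneg _)
            exact this
        _ = (cc j i : ℝ) * B i * R := by ring
  calc |∑ i ∈ Finset.range (j+1), (cc j i : ℝ) * τ^i * ζ^(2*i - j) * gg n i (τ * ζ^2)|
      ≤ ∑ i ∈ Finset.range (j+1), |(cc j i : ℝ) * τ^i * ζ^(2*i - j) * gg n i (τ * ζ^2)| :=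
        Finset.abs_sum_le_sum_abs _ _
    _ ≤ ∑ i ∈ Finset.range (j+1), (cc j i : ℝ) * B i * R := Finset.sum_le_sum hterm
    _ = S * R := by rw [hS, Finset.sum_mul]
    _ ≤ (S + 1) * R := by nlinarith
    _ = (S + 1) * τ ^ (n + 1) * |ζ| ^ (2 * n + 2 - j) *
          Real.exp ((2 - 1 / ((j : ℝ) + 1)) * τ * ζ ^ 2) := by
        rw [hR, mul_assoc ((2:ℝ) - 1 / ((j:ℝ)+1)) τ (ζ^2)]
        ring
end

section
/- Let T > 0, A ≥ 0, b ≥ 0, let a : [0,T] → [0,∞) be continuous, and let N : [0,T] → [0,∞) be continuous and satisfy N(t) ≤ A + ∫_0^t ( a(σ) N(σ) + b N(σ)² ) dσ for all t ∈ [0,T]. Then for every t ∈ [0,T] such that A·b·∫_0^t exp( ∫_0^σ a(r) dr ) dσ < 1, one has N(t) ≤ A exp( ∫_0^t a(σ) dσ ) / ( 1 − A b ∫_0^t exp( ∫_0^σ a(r) dr ) dσ ). -/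
open MeasureTheory

lemma nonlinear_gronwall_aux (T : ℝ) (hT : 0 < T) (A b : ℝ) (hA : 0 < A) (hb : 0 ≤ b)
    (a N : ℝ → ℝ)
    (ha : ContinuousOn a (Set.Icc 0 T)) (ha0 : ∀ t ∈ Set.Icc (0 : ℝ) T, 0 ≤ a t)
    (hN : ContinuousOn N (Set.Icc 0 T)) (hN0 : ∀ t ∈ Set.Icc (0 : ℝ) T, 0 ≤ N t)
    (hineq : ∀ t ∈ Set.Icc (0 : ℝ) T,
      N t ≤ A + ∫ σ in (0 : ℝ)..t, (a σ * N σ + b * N σ ^ 2)) :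
    ∀ t ∈ Set.Icc (0 : ℝ) T,
      A * b * (∫ σ in (0 : ℝ)..t, Real.exp (∫ r in (0 : ℝ)..σ, a r)) < 1 →
      N t ≤ A * Real.exp (∫ σ in (0 : ℝ)..t, a σ) /
        (1 - A * b * ∫ σ in (0 : ℝ)..t, Real.exp (∫ r in (0 : ℝ)..σ, a r)) := by
  have hIoo : Set.Ioo (0:ℝ) T ⊆ Set.Icc 0 T := Set.Ioo_subset_Icc_self
  set f : ℝ → ℝ := fun σ => a σ * N σ + b * N σ ^ 2 with hfdef
  set u : ℝ → ℝ := fun s => A + ∫ σ in (0:ℝ)..s, f σ with hudef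
  set E : ℝ → ℝ := fun s => Real.exp (∫ r in (0:ℝ)..s, a r) with hEdef
  set g : ℝ → ℝ := fun s => E s / u s + b * ∫ σ in (0:ℝ)..s, E σ with hgdef
  -- generic interval integrability helper
  have hgen : ∀ (h : ℝ → ℝ), ContinuousOn h (Set.Icc 0 T) →
      ∀ x ∈ Set.Icc (0:ℝ) T, IntervalIntegrable h volume 0 x := by
    intro h hc x hx
    apply ContinuousOn.intervalIntegrable
    apply hc.mono
    rw [Set.uIcc_of_le hx.1]
    exact Set.Icc_subset_Icc_right hx.2
  -- continuity facts
  have hfc : ContinuousOn f (Set.Icc 0 T) :=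
    (ha.mul hN).add (continuousOn_const.mul (hN.pow 2))
  have hprim : ∀ (h : ℝ → ℝ), ContinuousOn h (Set.Icc 0 T) →
      ContinuousOn (fun s => ∫ σ in (0:ℝ)..s, h σ) (Set.Icc 0 T) := by
    intro h hc
    have hInt : IntegrableOn h (Set.uIcc 0 T) volume := by
      rw [Set.uIcc_of_le hT.le]
      exact hc.integrableOn_Icc
    have := intervalIntegral.continuousOn_primitive_interval hInt
    rwa [Set.uIcc_of_le hT.le] at this
  have huc : ContinuousOn u (Set.Icc 0 T) := continuousOn_const.add (hprim f hfc)
  have hEc : ContinuousOn E (Set.Icc 0 T) := Real.continuous_exp.comp_continuousOn (hprim a ha)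
  -- positivity of u
  have hupos : ∀ s ∈ Set.Icc (0:ℝ) T, 0 < u s := by
    intro s hs
    have hnn : (0:ℝ) ≤ ∫ σ in (0:ℝ)..s, f σ := by
      apply intervalIntegral.integral_nonneg hs.1
      intro σ hσ
      have hσT : σ ∈ Set.Icc (0:ℝ) T := ⟨hσ.1, hσ.2.trans hs.2⟩
      have := hN0 σ hσT
      have := ha0 σ hσT
      simp only [hfdef]
      positivity
    simp only [hudef]
    linarith
  have hNu : ∀ s ∈ Set.Icc (0:ℝ) T, N s ≤ u s := hineq
  have hgc : ContinuousOn g (Set.Icc 0 T) :=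
    (hEc.div huc (fun s hs => (hupos s hs).ne')).add (continuousOn_const.mul (hprim E hEc))
  -- derivative of g on the interior
  have key : ∀ x ∈ Set.Ioo (0:ℝ) T,
      HasDerivAt g ((E x * a x * u x - E x * f x) / u x ^ 2 + b * E x) x := by
    intro x hx
    have hmem : Set.Icc (0:ℝ) T ∈ nhds x := Icc_mem_nhds hx.1 hx.2
    have hax : HasDerivAt (fun s => ∫ r in (0:ℝ)..s, a r) (a x) x :=
      intervalIntegral.integral_hasDerivAt_right (hgen a ha x (hIoo hx))
        (ContinuousOn.stronglyMeasurableAtFilter isOpen_Ioo (ha.mono hIoo) x hx)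
        (ha.continuousAt hmem)
    have hEx : HasDerivAt E (E x * a x) x := hax.exp
    have hux : HasDerivAt u (f x) x :=
      HasDerivAt.const_add A
        (intervalIntegral.integral_hasDerivAt_right (hgen f hfc x (hIoo hx))
          (ContinuousOn.stronglyMeasurableAtFilter isOpen_Ioo (hfc.mono hIoo) x hx)
          (hfc.continuousAt hmem))
    have hIx : HasDerivAt (fun s => ∫ σ in (0:ℝ)..s, E σ) (E x) x :=
      intervalIntegral.integral_hasDerivAt_right (hgen E hEc x (hIoo hx))
        (ContinuousOn.stronglyMeasurableAtFilter isOpen_Ioo (hEc.mono hIoo) x hx)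
        (hEc.continuousAt hmem)
    exact (hEx.div hux (hupos x (hIoo hx)).ne').add (hIx.const_mul b)
  -- monotonicity of g
  have hmono : MonotoneOn g (Set.Icc 0 T) := by
    apply monotoneOn_of_deriv_nonneg (convex_Icc 0 T) hgc
    · rw [interior_Icc]
      exact fun x hx => ((key x hx).differentiableAt).differentiableWithinAt
    · rw [interior_Icc]
      intro x hx
      rw [(key x hx).deriv]
      have hu := hupos x (hIoo hx)
      have hNx := hNu x (hIoo hx)
      have hN0x := hN0 x (hIoo hx)
      have hax := ha0 x (hIoo hx)
      have hEx : 0 < E x := Real.exp_pos _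
      have hfle : f x ≤ a x * u x + b * u x ^ 2 := by
        have h2 : N x ^ 2 ≤ u x ^ 2 := pow_le_pow_left₀ hN0x hNx 2
        have h3 : a x * N x ≤ a x * u x := mul_le_mul_of_nonneg_left hNx hax
        have h4 : b * N x ^ 2 ≤ b * u x ^ 2 := mul_le_mul_of_nonneg_left h2 hb
        simp only [hfdef]
        linarith
      have hkey : -(b * E x) ≤ (E x * a x * u x - E x * f x) / u x ^ 2 := by
        rw [le_div_iff₀ (by positivity)]
        nlinarith
      linarith
  -- conclude
  intro t ht hlt
  have h0 : g 0 = 1 / A := by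
    simp [hgdef, hEdef, hudef]
  have hgt := hmono (Set.left_mem_Icc.2 hT.le) ht ht.1
  rw [h0] at hgt
  simp only [hgdef] at hgt
  have hut : 0 < u t := hupos t ht
  have hEt : 0 < E t := Real.exp_pos _
  have hD : 0 < 1 - A * b * ∫ σ in (0:ℝ)..t, E σ := by linarith
  have hNt : N t ≤ u t := hNu t ht
  rw [div_add' _ _ _ hut.ne', div_le_div_iff₀ hA hut] at hgt
  have hshow : Real.exp (∫ σ in (0:ℝ)..t, a σ) = E t := rfl
  rw [hshow, le_div_iff₀ hD]
  nlinarith [mul_le_mul_of_nonneg_right hNt hD.le]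

/-- Nonlinear Gronwall (Bihari-type) comparison inequality: if a continuous nonnegative
`N` on `[0,T]` satisfies `N(t) ≤ A + ∫_0^t (a N + b N²)`, then as long as
`A b ∫_0^t exp(∫_0^σ a) dσ < 1`, one has
`N(t) ≤ A exp(∫_0^t a) / (1 − A b ∫_0^t exp(∫_0^σ a) dσ)`. -/
theorem nonlinear_gronwall (T : ℝ) (hT : 0 < T) (A b : ℝ) (hA : 0 ≤ A) (hb : 0 ≤ b)
    (a N : ℝ → ℝ)
    (ha : ContinuousOn a (Set.Icc 0 T)) (ha0 : ∀ t ∈ Set.Icc (0 : ℝ) T, 0 ≤ a t)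
    (hN : ContinuousOn N (Set.Icc 0 T)) (hN0 : ∀ t ∈ Set.Icc (0 : ℝ) T, 0 ≤ N t)
    (hineq : ∀ t ∈ Set.Icc (0 : ℝ) T,
      N t ≤ A + ∫ σ in (0 : ℝ)..t, (a σ * N σ + b * N σ ^ 2)) :
    ∀ t ∈ Set.Icc (0 : ℝ) T,
      A * b * (∫ σ in (0 : ℝ)..t, Real.exp (∫ r in (0 : ℝ)..σ, a r)) < 1 →
      N t ≤ A * Real.exp (∫ σ in (0 : ℝ)..t, a σ) /
        (1 - A * b * ∫ σ in (0 : ℝ)..t, Real.exp (∫ r in (0 : ℝ)..σ, a r)) := by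
  intro t ht hlt
  set It := ∫ σ in (0:ℝ)..t, Real.exp (∫ r in (0:ℝ)..σ, a r) with hIt
  set Et := Real.exp (∫ σ in (0:ℝ)..t, a σ) with hEt
  have hD : (0:ℝ) < 1 - A * b * It := by linarith
  have hlim : Filter.Tendsto (fun ε : ℝ => (A + ε) * Et / (1 - (A + ε) * b * It))
      (nhdsWithin 0 (Set.Ioi 0)) (nhds (A * Et / (1 - A * b * It))) := by
    have hc : ContinuousAt (fun ε : ℝ => (A + ε) * Et / (1 - (A + ε) * b * It)) 0 := by
      apply ContinuousAt.div (by fun_prop) (by fun_prop)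
      simpa using hD.ne'
    have h2 := hc.tendsto
    simp only [add_zero] at h2
    exact h2.mono_left nhdsWithin_le_nhds
  apply ge_of_tendsto hlim
  have hev1 : ∀ᶠ ε : ℝ in nhdsWithin 0 (Set.Ioi 0), (A + ε) * b * It < 1 := by
    have hc : ContinuousAt (fun ε : ℝ => (A + ε) * b * It) 0 := by fun_prop
    have ht2 : Filter.Tendsto (fun ε : ℝ => (A + ε) * b * It)
        (nhdsWithin 0 (Set.Ioi 0)) (nhds (A * b * It)) := by
      have h2 := hc.tendsto
      simp only [add_zero] at h2
      exact h2.mono_left nhdsWithin_le_nhds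
    exact ht2.eventually_lt_const hlt
  filter_upwards [hev1, self_mem_nhdsWithin] with ε h1 hε
  have hε' : 0 < ε := hε
  exact nonlinear_gronwall_aux T hT (A + ε) b (by linarith) hb a N ha ha0 hN hN0
    (fun s hs => (hineq s hs).trans (by linarith)) t ht h1
end
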